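/- arXiv:2312.07470 — 4 statements merged into one kernel-verified Lean document; each statement's English description precedes it below -/
import Mathlib

section
/- Let z = x + iy be a complex number with y ≠ 0 or x² ≥ 1, let r₁ = |z−1|, r₂ = |z+1|, α = (r₁+r₂)/2, β = (r₂−r₁)/2. Then the complex number X(z) = β·√(α²−1) + i·sign(y)·α·√(1−β²) satisfies X(z)² = z² − 1. -/
/-!
With `a = α(z)`, `b = β(z)` one has `a b = x` and `a² + b² = x² + y² + 1`, hence
`(a² - 1)(1 - b²) = y²`. So the imaginary part of `X²` is `2 sign(y) a b |y| = 2 x y`, and its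
real part differs from `x² - y² - 1` by `a² (1 - sign(y)²)(1 - b²)`, which vanishes off the cut:
`sign(y)² = 1` when `y ≠ 0`, and `b² = 1` on the real axis outside `(-1, 1)`.
-/

open Complex

/-- `α(w) = (|w-1| + |w+1|)/2`. -/
noncomputable def alpha (w : ℂ) : ℝ := (‖w - 1‖ + ‖w + 1‖) / 2

/-- `β(w) = (|w+1| - |w-1|)/2`. -/
noncomputable def beta (w : ℂ) : ℝ := (‖w + 1‖ - ‖w - 1‖) / 2

/-- Principal branch `X(w)` of `√(w²-1)` on the cut plane `ℂ ∖ (-1, 1)`. -/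
noncomputable def X (w : ℂ) : ℂ :=
  (beta w * Real.sqrt ((alpha w) ^ 2 - 1) : ℝ) +
    Complex.I * (Real.sign w.im : ℝ) * (alpha w * Real.sqrt (1 - (beta w) ^ 2) : ℝ)

namespace Real

theorem sign_mul_abs (r : ℝ) : sign r * |r| = r := by
  rcases lt_trichotomy r 0 with hr | rfl | hr
  · rw [sign_of_neg hr, abs_of_neg hr]; ring
  · simp
  · rw [sign_of_pos hr, abs_of_pos hr]; ring

theorem sign_sq_of_ne_zero {r : ℝ} (hr : r ≠ 0) : sign r ^ 2 = 1 := by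
  rcases sign_apply_eq_of_ne_zero r hr with h | h <;> norm_num [h]

end Real

section

variable (w : ℂ)

theorem norm_sub_one_sq : ‖w - 1‖ ^ 2 = (w.re - 1) ^ 2 + w.im ^ 2 := by
  simp [Complex.sq_norm, Complex.normSq_apply]; ring

theorem norm_add_one_sq : ‖w + 1‖ ^ 2 = (w.re + 1) ^ 2 + w.im ^ 2 := by
  simp [Complex.sq_norm, Complex.normSq_apply]; ring

theorem alpha_mul_beta : alpha w * beta w = w.re := by
  unfold alpha beta
  linear_combination (norm_add_one_sq w - norm_sub_one_sq w) / 4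

theorem alpha_sq_add_beta_sq : alpha w ^ 2 + beta w ^ 2 = w.re ^ 2 + w.im ^ 2 + 1 := by
  unfold alpha beta
  linear_combination (norm_sub_one_sq w + norm_add_one_sq w) / 2

theorem alpha_sq_sub_one_mul_one_sub_beta_sq :
    (alpha w ^ 2 - 1) * (1 - beta w ^ 2) = w.im ^ 2 := by
  linear_combination alpha_sq_add_beta_sq w - (alpha w * beta w + w.re) * alpha_mul_beta w

theorem one_le_alpha : 1 ≤ alpha w := by
  have := norm_sub_le (w + 1) (w - 1)
  rw [show w + 1 - (w - 1) = 2 by ring, Complex.norm_two] at this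
  unfold alpha; linarith

theorem beta_sq_le_one : beta w ^ 2 ≤ 1 := by
  have := abs_norm_sub_norm_le (w + 1) (w - 1)
  rw [show w + 1 - (w - 1) = 2 by ring, Complex.norm_two] at this
  rw [sq_le_one_iff_abs_le_one]
  unfold beta; rw [abs_div, abs_two]; linarith

theorem sqrt_alpha_sq_sub_one_mul_sqrt_one_sub_beta_sq :
    √(alpha w ^ 2 - 1) * √(1 - beta w ^ 2) = |w.im| := by
  have : 0 ≤ alpha w ^ 2 - 1 := by nlinarith [one_le_alpha w]
  rw [← Real.sqrt_mul this, alpha_sq_sub_one_mul_one_sub_beta_sq, Real.sqrt_sq_eq_abs]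

theorem beta_sq_eq_one_of_im_eq_zero (hy : w.im = 0) (hx : 1 ≤ w.re ^ 2) :
    beta w ^ 2 = 1 := by
  have hprod : (alpha w ^ 2 - 1) * (1 - beta w ^ 2) = 0 := by
    rw [alpha_sq_sub_one_mul_one_sub_beta_sq, hy]; norm_num
  rcases mul_eq_zero.mp hprod with ha | hb
  · have : w.re ^ 2 = beta w ^ 2 := by
      rw [← alpha_mul_beta w]; linear_combination beta w ^ 2 * ha
    linarith [beta_sq_le_one w]
  · linarith

theorem X_re : (X w).re = beta w * √(alpha w ^ 2 - 1) := by simp [X]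

theorem X_im : (X w).im = Real.sign w.im * (alpha w * √(1 - beta w ^ 2)) := by simp [X]

end

theorem stmt3 (z : ℂ) (h : z.im ≠ 0 ∨ 1 ≤ z.re ^ 2) : (X z) ^ 2 = z ^ 2 - 1 := by
  have hA : √(alpha z ^ 2 - 1) ^ 2 = alpha z ^ 2 - 1 :=
    Real.sq_sqrt (by nlinarith [one_le_alpha z])
  have hB : √(1 - beta z ^ 2) ^ 2 = 1 - beta z ^ 2 :=
    Real.sq_sqrt (by linarith [beta_sq_le_one z])
  have hcut : (1 - Real.sign z.im ^ 2) * (1 - beta z ^ 2) = 0 := by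
    rcases eq_or_ne z.im 0 with hy | hy
    · rw [beta_sq_eq_one_of_im_eq_zero z hy (h.resolve_left (not_not_intro hy))]; ring
    · rw [Real.sign_sq_of_ne_zero hy]; ring
  rw [pow_two (X z), pow_two z]
  apply Complex.ext <;> simp only [Complex.mul_re, Complex.mul_im, Complex.sub_re,
    Complex.sub_im, Complex.one_re, Complex.one_im, X_re, X_im]
  · linear_combination beta z ^ 2 * hA - (Real.sign z.im * alpha z) ^ 2 * hB
      + alpha z ^ 2 * hcut + (2 * alpha z * beta z + 2 * z.re) * alpha_mul_beta z
      - alpha_sq_add_beta_sq z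
  · linear_combination (2 * alpha z * beta z * Real.sign z.im) *
        sqrt_alpha_sq_sub_one_mul_sqrt_one_sub_beta_sq z
      + 2 * z.re * Real.sign_mul_abs z.im + 2 * Real.sign z.im * |z.im| * alpha_mul_beta z
end

section
/- Let z = x + iy be a complex number with y ≠ 0. Then the function Y, defined by Y(w) = α(w)·√(1−β(w)²) − i·sign(Im w)·β(w)·√(α(w)²−1) with α(w) = (|w−1|+|w+1|)/2 and β(w) = (|w+1|−|w−1|)/2, is complex differentiable at z with derivative Y′(z) = −z/Y(z). -/
open Complex

/-- Principal branch `Y(w)` of `√(1-w²)` on the cut plane `ℂ ∖ ((-∞,-1) ∪ (1,∞))`. -/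
noncomputable def Y (w : ℂ) : ℂ :=
  (alpha w * Real.sqrt (1 - (beta w) ^ 2) : ℝ) -
    Complex.I * (Real.sign w.im : ℝ) * (beta w * Real.sqrt ((alpha w) ^ 2 - 1) : ℝ)

/-!
On the open set `Im w ≠ 0` one has `α² - 1 > 0`, `1 - β² > 0` and `(α² - 1)(1 - β²) = (Im w)²`,
`αβ = Re w`, `α² + β² = |w|² + 1`; these identities give `Y(w)² = 1 - w²`, and `Re Y(w) > 0`.
A square root with positive real part is the principal one, so `Y` agrees near `z` with
`w ↦ Complex.sqrt (1 - w²)`, whose derivative the chain rule gives as `-z / √(1 - z²)`.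
-/

theorem Real.sign_mul_abs_s7 (r : ℝ) : Real.sign r * |r| = r := by
  rcases lt_trichotomy r 0 with hr | rfl | hr
  · rw [Real.sign_of_neg hr, abs_of_neg hr]; ring
  · simp
  · rw [Real.sign_of_pos hr, abs_of_pos hr]; ring

namespace Complex

theorem sq_mem_slitPlane_of_re_pos {u : ℂ} (hu : 0 < u.re) : u ^ 2 ∈ slitPlane := by
  rw [mem_slitPlane_iff]
  by_cases him : u.im = 0
  · left; simp [pow_two, him]; positivity
  · right; rw [pow_two, mul_im]; exact fun h => mul_ne_zero hu.ne' him (by linarith)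

theorem eq_sqrt_of_sq_eq_of_re_pos {u v : ℂ} (hsq : u ^ 2 = v) (hu : 0 < u.re) :
    u = sqrt v := by
  have hsqrt_sq : sqrt v ^ 2 = v := cpow_ofNat_inv_pow v 2
  have hsqrt_re : 0 ≤ (sqrt v).re := by rw [sqrt, cpow_inv_two_re]; positivity
  have hfac : (u - sqrt v) * (u + sqrt v) = 0 := by linear_combination hsq - hsqrt_sq
  rcases mul_eq_zero.mp hfac with h | h
  · exact sub_eq_zero.mp h
  · have := congrArg re h
    simp only [add_re, zero_re] at this
    linarith

theorem hasDerivAt_sqrt_one_sub_sq {z : ℂ} (hz : 1 - z ^ 2 ∈ slitPlane) :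
    HasDerivAt (fun w => sqrt (1 - w ^ 2)) (-z / sqrt (1 - z ^ 2)) z := by
  have h := (hasDerivAt_sqrt hz).comp z ((hasDerivAt_pow 2 z).const_sub 1)
  refine h.congr_deriv ?_
  rw [show (-1 / 2 : ℂ) = -2⁻¹ by norm_num, cpow_neg, sqrt]
  push_cast
  ring

theorem sq_norm_sub_one (w : ℂ) : ‖w - 1‖ ^ 2 = (w.re - 1) ^ 2 + w.im ^ 2 := by
  rw [Complex.sq_norm, normSq_apply]; simp; ring

theorem sq_norm_add_one (w : ℂ) : ‖w + 1‖ ^ 2 = (w.re + 1) ^ 2 + w.im ^ 2 := by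
  rw [Complex.sq_norm, normSq_apply]; simp; ring

end Complex

section AlphaBeta

variable (w : ℂ)

theorem abs_beta_le_one : |beta w| ≤ 1 := by
  have h₁ := abs_norm_sub_norm_le (w + 1) (w - 1)
  rw [show w + 1 - (w - 1) = 2 by ring, Complex.norm_two] at h₁
  unfold beta
  rw [abs_div, abs_two]
  linarith

variable {w}

theorem alpha_sq_sub_one_mul_one_sub_beta_sq_pos (hw : w.im ≠ 0) :
    0 < (alpha w ^ 2 - 1) * (1 - beta w ^ 2) := by
  rw [alpha_sq_sub_one_mul_one_sub_beta_sq]; positivity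

theorem one_sub_beta_sq_pos (hw : w.im ≠ 0) : 0 < 1 - beta w ^ 2 :=
  pos_of_mul_pos_right (alpha_sq_sub_one_mul_one_sub_beta_sq_pos hw)
    (by nlinarith [one_le_alpha w])

theorem alpha_sq_sub_one_pos (hw : w.im ≠ 0) : 0 < alpha w ^ 2 - 1 :=
  pos_of_mul_pos_left (alpha_sq_sub_one_mul_one_sub_beta_sq_pos hw)
    (sub_nonneg.mpr ((sq_le_one_iff_abs_le_one _).mpr (abs_beta_le_one w)))

end AlphaBeta

section Y

variable {w : ℂ}

theorem Y_re_pos (hw : w.im ≠ 0) : 0 < (Y w).re := by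
  have hα : 0 < alpha w := zero_lt_one.trans_le (one_le_alpha w)
  have hβ := Real.sqrt_pos.mpr (one_sub_beta_sq_pos hw)
  simpa [Y] using mul_pos hα hβ

theorem Y_sq (hw : w.im ≠ 0) : Y w ^ 2 = 1 - w ^ 2 := by
  set p := √(1 - beta w ^ 2)
  set q := √(alpha w ^ 2 - 1)
  set s := Real.sign w.im
  have hp : p ^ 2 = 1 - beta w ^ 2 := Real.sq_sqrt (one_sub_beta_sq_pos hw).le
  have hq : q ^ 2 = alpha w ^ 2 - 1 := Real.sq_sqrt (alpha_sq_sub_one_pos hw).le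
  have hs : s ^ 2 = 1 := by
    rcases Real.sign_apply_eq_of_ne_zero _ hw with h | h <;> simp [s, h]
  have hspq : s * (p * q) = w.im := by
    rw [← Real.sqrt_mul (one_sub_beta_sq_pos hw).le, mul_comm (1 - _),
      alpha_sq_sub_one_mul_one_sub_beta_sq, Real.sqrt_sq_eq_abs, Real.sign_mul_abs_s7]
  have hαβ := alpha_mul_beta w
  have hsum := alpha_sq_add_beta_sq w
  have hre : (Y w).re = alpha w * p := by simp [Y, p]
  have him : (Y w).im = -(s * (beta w * q)) := by simp [Y, s, q]
  apply Complex.ext <;>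
    simp only [sq, mul_re, mul_im, sub_re, sub_im, one_re, one_im, hre, him]
  · linear_combination alpha w ^ 2 * hp - (beta w * q) ^ 2 * hs - beta w ^ 2 * hq + hsum -
      2 * (alpha w * beta w + w.re) * hαβ
  · linear_combination -2 * alpha w * beta w * hspq - 2 * w.im * hαβ

theorem Y_eq_sqrt (hw : w.im ≠ 0) : Y w = sqrt (1 - w ^ 2) :=
  eq_sqrt_of_sq_eq_of_re_pos (Y_sq hw) (Y_re_pos hw)

end Y

theorem stmt7 (z : ℂ) (h : z.im ≠ 0) : HasDerivAt Y (-z / Y z) z := by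
  have hY : Y =ᶠ[nhds z] fun w => sqrt (1 - w ^ 2) := by
    have hopen : IsOpen {w : ℂ | w.im ≠ 0} := isOpen_ne_fun continuous_im continuous_const
    filter_upwards [hopen.mem_nhds h] with w hw using Y_eq_sqrt hw
  have hslit : 1 - z ^ 2 ∈ slitPlane := Y_sq h ▸ sq_mem_slitPlane_of_re_pos (Y_re_pos h)
  rw [Y_eq_sqrt h]
  exact (hasDerivAt_sqrt_one_sub_sq hslit).congr_of_eventuallyEq hY
end

section
/- Let z = x + iy be a complex number with y ≠ 0, and let C(w) = arcosh(α(w)) + i·sign(Im w)·arccos(β(w)), where α(w) = (|w−1|+|w+1|)/2 and β(w) = (|w+1|−|w−1|)/2. Then C(−z) = −i·sign(y)·π + C(z); that is, the reflection formula for the principal inverse hyperbolic cosine carries −iπ for y > 0 and +iπ for y < 0 (correcting the sign in DLMF Eq. 4.37.11). -/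
open Complex

/-- Real inverse hyperbolic cosine, `arcosh t = ln (t + √(t²-1))`. -/
noncomputable def arcosh (t : ℝ) : ℝ := Real.log (t + Real.sqrt (t ^ 2 - 1))

/-- Principal branch `C(w)` of the inverse hyperbolic cosine on the cut plane
`ℂ ∖ (-∞, 1)`. -/
noncomputable def C (w : ℂ) : ℂ :=
  (arcosh (alpha w) : ℝ) + Complex.I * (Real.sign w.im : ℝ) * (Real.arccos (beta w) : ℝ)

/-! Negating `w` swaps `|w - 1|` and `|w + 1|`, so `α(-w) = α(w)` and `β(-w) = -β(w)`; together
with `arccos (-b) = π - arccos b` and `sign (-y) = -sign y` this gives the reflection formula. -/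

theorem norm_neg_sub_one (w : ℂ) : ‖-w - 1‖ = ‖w + 1‖ := by
  rw [← norm_neg, neg_sub, sub_neg_eq_add, add_comm]

theorem norm_neg_add_one (w : ℂ) : ‖-w + 1‖ = ‖w - 1‖ := by
  rw [← norm_neg, neg_add, neg_neg, sub_eq_add_neg]

theorem alpha_neg (w : ℂ) : alpha (-w) = alpha w := by
  rw [alpha, alpha, norm_neg_sub_one, norm_neg_add_one, add_comm]

theorem beta_neg (w : ℂ) : beta (-w) = -beta w := by
  rw [beta, beta, norm_neg_sub_one, norm_neg_add_one]
  ring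

theorem stmt16_general (z : ℂ) :
    C (-z) = -Complex.I * (Real.sign z.im : ℝ) * (Real.pi : ℝ) + C z := by
  simp only [C, alpha_neg, beta_neg, Real.arccos_neg, neg_im, Real.sign_neg]
  push_cast
  ring

theorem stmt16 (z : ℂ) (h : z.im ≠ 0) :
    C (-z) = -Complex.I * (Real.sign z.im : ℝ) * (Real.pi : ℝ) + C z :=
  stmt16_general z
end

section
/- Let z = x + iy be a complex number with y ≠ 0, and let C(w) = arcosh(α(w)) + i·sign(Im w)·arccos(β(w)), where α(w) = (|w−1|+|w+1|)/2 and β(w) = (|w+1|−|w−1|)/2. Then the principal inverse hyperbolic secant Asech(w) := C(1/w) satisfies Asech(−z) = i·sign(y)·π + Asech(z); that is, the reflection formula carries +iπ for y > 0 and −iπ for y < 0 (correcting the sign in DLMF Eq. 4.37.14). -/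
open Complex

/-- Principal branch of the inverse hyperbolic secant on the cut plane
`ℂ ∖ ((-∞,0] ∪ (1,∞))`. -/
noncomputable def Asech (w : ℂ) : ℂ := C (1 / w)

theorem C_neg (w : ℂ) : C (-w) = C w - I * (Real.sign w.im : ℝ) * (Real.pi : ℝ) := by
  rw [C, C, alpha_neg, beta_neg, Real.arccos_neg, neg_im, Real.sign_neg]
  push_cast
  ring

theorem sign_im_inv (w : ℂ) : Real.sign (w⁻¹).im = -Real.sign w.im := by
  rw [inv_im, neg_div, Real.sign_neg, neg_inj]
  rcases lt_trichotomy w.im 0 with hneg | hzero | hpos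
  · have hw : 0 < normSq w := normSq_pos.2 fun h0 => hneg.ne (by simp [h0])
    rw [Real.sign_of_neg hneg, Real.sign_of_neg (div_neg_of_neg_of_pos hneg hw)]
  · rw [hzero, zero_div]
  · have hw : 0 < normSq w := normSq_pos.2 fun h0 => hpos.ne' (by simp [h0])
    rw [Real.sign_of_pos hpos, Real.sign_of_pos (div_pos hpos hw)]

theorem stmt17_general (z : ℂ) :
    Asech (-z) = Complex.I * (Real.sign z.im : ℝ) * (Real.pi : ℝ) + Asech z := by
  rw [Asech, Asech, one_div, one_div, inv_neg, C_neg, sign_im_inv]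
  push_cast
  ring

theorem stmt17 (z : ℂ) (h : z.im ≠ 0) :
    Asech (-z) = Complex.I * (Real.sign z.im : ℝ) * (Real.pi : ℝ) + Asech z :=
  stmt17_general z
end
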